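/- Fix types α (tensor elements) and V (rule variables), natural numbers n and m, index transformers e : Fin n → (V → ℤ) → ℤ, condition predicates g : Fin m → (V → ℤ) → Prop, a scalar function scalarf : (Fin n → α) → (Fin m → Prop) → Prop, and a restriction-monotone family of precondition predicates Pre : ∀ i : ℕ, ((Fin i → V → ℤ) → Prop). For a rank i, define valid i := ∀ (X : (Fin i → ℤ) → α) (v : Fin i → (V → ℤ)), Pre i v → scalarf (fun r => X (fun j => e r (v j))) (fun l => ∀ j : Fin i, g l (v j)). Then for every k with max (m + n.choose 2) 1 ≤ k, valid k implies valid (k + 1). -/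
import Mathlib


/-- Validity of a rewrite rule (in canonical scalar-function form with `n` accesses to
the single input tensor `X` and `m` fold-conditions) at rank `i`. -/
def Valid {α V : Type*} (n m : ℕ)
    (e : Fin n → (V → ℤ) → ℤ)
    (g : Fin m → (V → ℤ) → Prop)
    (scalarf : (Fin n → α) → (Fin m → Prop) → Prop)
    (Pre : ∀ i : ℕ, (Fin i → V → ℤ) → Prop)
    (i : ℕ) : Prop :=
  ∀ (X : (Fin i → ℤ) → α) (v : Fin i → V → ℤ), Pre i v →
    scalarf (fun r => X (fun j => e r (v j))) (fun l => ∀ j : Fin i, g l (v j))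

/-- Sufficient-rank lemma for rules with `n` accesses and `m` conditions: if the
precondition family is restriction-monotone, then for every `k ≥ max (m + C(n,2)) 1`,
validity at rank `k` implies validity at rank `k+1`. -/
theorem sufficient_rank_many_accesses {α V : Type*} (n m : ℕ)
    (e : Fin n → (V → ℤ) → ℤ)
    (g : Fin m → (V → ℤ) → Prop)
    (scalarf : (Fin n → α) → (Fin m → Prop) → Prop)
    (Pre : ∀ i : ℕ, (Fin i → V → ℤ) → Prop)
    (hPre : ∀ (k i : ℕ), k ≤ i → ∀ ρ : Fin k → Fin i, Function.Injective ρ →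
      ∀ v : Fin i → V → ℤ, Pre i v → Pre k (fun j => v (ρ j)))
    (k : ℕ) (hk : max (m + n.choose 2) 1 ≤ k) :
    Valid n m e g scalarf Pre k → Valid n m e g scalarf Pre (k + 1) := by
  classical
  intro hval X v hv
  have hk1 : 1 ≤ k := le_trans (le_max_right _ _) hk
  -- witness axes for failing conditions
  set w₁ : Fin m → Fin (k+1) := fun l =>
    if h : ∃ j, ¬ g l (v j) then h.choose else ⟨0, by omega⟩ with hw₁
  -- witness axes for differing pairs of accesses (indexed by 2-element subsets)
  set w₂ : Finset (Fin n) → Fin (k+1) := fun s =>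
    if h : ∃ j, ∃ a ∈ s, ∃ b ∈ s, e a (v j) ≠ e b (v j) then h.choose else ⟨0, by omega⟩
    with hw₂
  set S : Finset (Fin (k+1)) :=
    Finset.image w₁ Finset.univ ∪ Finset.image w₂ (Finset.powersetCard 2 Finset.univ)
    with hS
  have hScard : S.card < k + 1 := by
    have h1 : (Finset.image w₁ (Finset.univ : Finset (Fin m))).card ≤ m :=
      le_trans Finset.card_image_le (by simp)
    have h2 : (Finset.image w₂ (Finset.powersetCard 2 (Finset.univ : Finset (Fin n)))).card
        ≤ n.choose 2 :=
      le_trans Finset.card_image_le (by simp [Finset.card_powersetCard])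
    have := Finset.card_union_le (Finset.image w₁ Finset.univ)
      (Finset.image w₂ (Finset.powersetCard 2 Finset.univ))
    rw [← hS] at this
    have hmk : m + n.choose 2 ≤ k := le_trans (le_max_left _ _) hk
    omega
  obtain ⟨j₀, hj₀⟩ : ∃ j₀ : Fin (k+1), j₀ ∉ S := by
    by_contra h
    push_neg at h
    have hsub : (Finset.univ : Finset (Fin (k+1))) ⊆ S := fun x _ => h x
    have := Finset.card_le_card hsub
    simp at this
    omega
  set ρ : Fin k → Fin (k+1) := j₀.succAbove with hρdef
  have hρ : Function.Injective ρ := Fin.succAbove_right_injective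
  have hsurj : ∀ j : Fin (k+1), j ≠ j₀ → ∃ i, ρ i = j := fun j hj =>
    Fin.exists_succAbove_eq hj
  set v' : Fin k → V → ℤ := fun j => v (ρ j) with hv'
  -- conditions are preserved under restriction
  have hcond : ∀ l, (∀ j : Fin k, g l (v' j)) → ∀ j : Fin (k+1), g l (v j) := by
    intro l hl j
    by_contra hg
    have hex : ∃ j, ¬ g l (v j) := ⟨j, hg⟩
    have hwne : ¬ g l (v (w₁ l)) := by
      simp only [hw₁, dif_pos hex]
      exact hex.choose_spec
    have hmem : w₁ l ∈ S :=
      Finset.mem_union_left _ (Finset.mem_image_of_mem _ (Finset.mem_univ l))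
    have hne0 : w₁ l ≠ j₀ := fun h => hj₀ (h ▸ hmem)
    obtain ⟨i, hi⟩ := hsurj _ hne0
    have : g l (v (ρ i)) := hl i
    rw [hi] at this
    exact hwne this
  -- access-equality pattern is preserved under restriction
  have hacc : ∀ r r' : Fin n, ((fun j => e r (v' j)) = fun j => e r' (v' j)) →
      (fun j : Fin (k+1) => e r (v j)) = fun j => e r' (v j) := by
    intro r r' h
    by_contra hne
    obtain ⟨j, hj⟩ := Function.ne_iff.mp hne
    have hrr' : r ≠ r' := by rintro rfl; exact hne rfl
    set s : Finset (Fin n) := {r, r'} with hs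
    have hex : ∃ j, ∃ a ∈ s, ∃ b ∈ s, e a (v j) ≠ e b (v j) :=
      ⟨j, r, by simp [hs], r', by simp [hs], hj⟩
    have hsmem : s ∈ Finset.powersetCard 2 (Finset.univ : Finset (Fin n)) := by
      simp [Finset.mem_powersetCard, hs, Finset.card_pair hrr']
    have hw : ∃ a ∈ s, ∃ b ∈ s, e a (v (w₂ s)) ≠ e b (v (w₂ s)) := by
      simp only [hw₂, dif_pos hex]
      exact hex.choose_spec
    have hmem : w₂ s ∈ S :=
      Finset.mem_union_right _ (Finset.mem_image_of_mem _ hsmem)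
    have hne0 : w₂ s ≠ j₀ := fun h => hj₀ (h ▸ hmem)
    obtain ⟨i, hi⟩ := hsurj _ hne0
    have heq : e r (v (w₂ s)) = e r' (v (w₂ s)) := by
      have hci := congrFun h i
      simp only [hv'] at hci
      rw [hi] at hci
      exact hci
    obtain ⟨a, ha, b, hb, hab⟩ := hw
    simp only [hs, Finset.mem_insert, Finset.mem_singleton] at ha hb
    rcases ha with rfl | rfl <;> rcases hb with rfl | rfl
    · exact hab rfl
    · exact hab heq
    · exact hab heq.symm
    · exact hab rfl
  have hpre' : Pre k v' := hPre k (k+1) (by omega) ρ hρ v hv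
  set X' : (Fin k → ℤ) → α := fun idx =>
    if h : ∃ r : Fin n, (fun j => e r (v' j)) = idx then X (fun j => e h.choose (v j))
    else X (fun _ => 0) with hX'
  have hmain := hval X' v' hpre'
  have hA : (fun r => X' (fun j => e r (v' j))) = fun r => X (fun j => e r (v j)) := by
    funext r
    have hex : ∃ r0 : Fin n, (fun j => e r0 (v' j)) = fun j => e r (v' j) := ⟨r, rfl⟩
    simp only [hX', dif_pos hex]
    have := hacc hex.choose r hex.choose_spec
    rw [this]
  have hB : (fun l => ∀ j : Fin k, g l (v' j)) = fun l => ∀ j : Fin (k+1), g l (v j) := by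
    funext l
    apply propext
    constructor
    · exact hcond l
    · intro h j
      exact h (ρ j)
  rw [hA, hB] at hmain
  exact hmain
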